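/- Let μ₀ > 1 and let x, y ≥ μ₀. Then | G(x) − G(y) | ≤ (β(μ₀)/2) | x² − y² |, where G(λ) = ((λ+1)/2)·log((λ+1)/2) − ((λ−1)/2)·log((λ−1)/2) and β(μ₀) = log((μ₀+1)/(μ₀−1)). -/

import Mathlib

/-- `G(λ) = ((λ+1)/2)·log((λ+1)/2) − ((λ−1)/2)·log((λ−1)/2)`, the one-mode entropy. -/
noncomputable def Gent (l : ℝ) : ℝ :=
  ((l + 1) / 2) * Real.log ((l + 1) / 2) - ((l - 1) / 2) * Real.log ((l - 1) / 2)

/-- `β(μ) = log((μ+1)/(μ−1))`, the inverse temperature. -/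
noncomputable def betaInv (m : ℝ) : ℝ := Real.log ((m + 1) / (m - 1))

lemma Gent_hasDerivAt (l : ℝ) (hl : 1 < l) :
    HasDerivAt Gent ((1 / 2) * Real.log ((l + 1) / (l - 1))) l := by
  have h1 : (0:ℝ) < (l + 1) / 2 := by linarith
  have h2 : (0:ℝ) < (l - 1) / 2 := by linarith
  have hu : HasDerivAt (fun t : ℝ => (t + 1) / 2) (1 / 2) l := by
    simpa using (((hasDerivAt_id l).add_const 1).div_const 2)
  have hv : HasDerivAt (fun t : ℝ => (t - 1) / 2) (1 / 2) l := by
    simpa using (((hasDerivAt_id l).sub_const 1).div_const 2)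
  have hlogu := hu.log h1.ne'
  have hlogv := hv.log h2.ne'
  have := (hu.mul hlogu).sub (hv.mul hlogv)
  have key : (1:ℝ) / 2 * Real.log ((l + 1) / 2) + (l + 1) / 2 * (1 / 2 / ((l + 1) / 2))
      - (1 / 2 * Real.log ((l - 1) / 2) + (l - 1) / 2 * (1 / 2 / ((l - 1) / 2)))
      = 1 / 2 * Real.log ((l + 1) / (l - 1)) := by
    have e1 : (l + 1) / 2 * (1 / 2 / ((l + 1) / 2)) = 1 / 2 := by
      field_simp
    have e2 : (l - 1) / 2 * (1 / 2 / ((l - 1) / 2)) = 1 / 2 := by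
      field_simp
      exact div_self (ne_of_gt (by nlinarith))
    rw [e1, e2, show (l + 1) / (l - 1) = ((l + 1) / 2) / ((l - 1) / 2) by
      field_simp, Real.log_div h1.ne' h2.ne']
    ring
  rw [← key]
  exact this

/-- **Mean-value bound for the entropy function** (Statement 16): for `μ₀ > 1` and
`x, y ≥ μ₀`, `|G(x) − G(y)| ≤ (β(μ₀)/2) |x² − y²|`. -/
theorem Gent_diff_le (μ₀ : ℝ) (hμ₀ : 1 < μ₀) (x y : ℝ) (hx : μ₀ ≤ x) (hy : μ₀ ≤ y) :
    |Gent x - Gent y| ≤ betaInv μ₀ / 2 * |x ^ 2 - y ^ 2| := by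
  set C := betaInv μ₀ / 2 with hC
  have hCnonneg : 0 ≤ C := by
    have : (1:ℝ) ≤ (μ₀ + 1) / (μ₀ - 1) := by
      rw [le_div_iff₀ (by linarith)]; linarith
    have := Real.log_nonneg this
    simp only [hC, betaInv]; linarith
  -- Lipschitz bound on Ici μ₀
  have hlip : |Gent x - Gent y| ≤ C * |x - y| := by
    have hconv : Convex ℝ (Set.Ici μ₀) := convex_Ici μ₀
    have hderiv : ∀ l ∈ Set.Ici μ₀,
        HasDerivWithinAt Gent ((1 / 2) * Real.log ((l + 1) / (l - 1))) (Set.Ici μ₀) l := by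
      intro l hl
      exact (Gent_hasDerivAt l (lt_of_lt_of_le hμ₀ hl)).hasDerivWithinAt
    have hbound : ∀ l ∈ Set.Ici μ₀,
        ‖(1 / 2) * Real.log ((l + 1) / (l - 1))‖ ≤ C := by
      intro l hl
      have hl1 : 1 < l := lt_of_lt_of_le hμ₀ hl
      have h1 : (1:ℝ) ≤ (l + 1) / (l - 1) := by
        rw [le_div_iff₀ (by linarith)]; linarith
      have hle : (l + 1) / (l - 1) ≤ (μ₀ + 1) / (μ₀ - 1) := by
        rw [div_le_div_iff₀ (by linarith) (by linarith)]
        nlinarith [Set.mem_Ici.mp hl]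
      have hlog0 : 0 ≤ Real.log ((l + 1) / (l - 1)) := Real.log_nonneg h1
      have hlogle : Real.log ((l + 1) / (l - 1)) ≤ Real.log ((μ₀ + 1) / (μ₀ - 1)) :=
        Real.log_le_log (by linarith) hle
      rw [Real.norm_eq_abs, abs_of_nonneg (by positivity)]
      simp only [hC, betaInv]; linarith
    have := hconv.norm_image_sub_le_of_norm_hasDerivWithin_le hderiv hbound
      (Set.mem_Ici.mpr hy) (Set.mem_Ici.mpr hx)
    simpa [Real.norm_eq_abs] using this
  have hxy : |x - y| ≤ |x ^ 2 - y ^ 2| := by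
    have : x ^ 2 - y ^ 2 = (x - y) * (x + y) := by ring
    rw [this, abs_mul]
    have h2 : (1:ℝ) ≤ |x + y| := by
      rw [abs_of_nonneg (by linarith)]; linarith
    nlinarith [abs_nonneg (x - y)]
  calc |Gent x - Gent y| ≤ C * |x - y| := hlip
    _ ≤ C * |x ^ 2 - y ^ 2| := by
        exact mul_le_mul_of_nonneg_left hxy hCnonneg
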